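/- For every natural number n ≥ 10, there are exactly thirty-seven (n−4)-dimensional numbers in the 2^n space; that is, T(n, n−4) = 37. -/

import Mathlib

/-! An odd number of dimension `d` is at least `3 ^ d`. Hence once `2 ^ (n + 1) < 3 ^ (d + 1)`,
every number up to `2 ^ (n + 1)` of dimension `d + 1` is even, and halving is a bijection onto the
numbers up to `2 ^ n` of dimension `d`: `T (n + 1) (d + 1) = T n d`. For `d = n - 4` this holds
from `n = 10` on (`2 ^ 11 < 3 ^ 7`), so `T n (n - 4) = T 10 6 = 37`, the last value by direct
computation. -/

/-- The dimension of a natural number: the number of prime factors counted with multiplicity. -/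
def dimension (m : ℕ) : ℕ := m.primeFactorsList.length

/-- `T n d` is the number of natural numbers `m` with `1 ≤ m ≤ 2^n` and dimension `d`. -/
def T (n d : ℕ) : ℕ :=
  ((Finset.Icc 1 (2 ^ n)).filter (fun m => dimension m = d)).card

lemma dimension_mul {a b : ℕ} (ha : a ≠ 0) (hb : b ≠ 0) :
    dimension (a * b) = dimension a + dimension b := by
  rw [dimension, (Nat.perm_primeFactorsList_mul ha hb).length_eq, List.length_append]
  rfl

lemma dimension_two_mul {m : ℕ} (hm : m ≠ 0) : dimension (2 * m) = dimension m + 1 := by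
  rw [dimension_mul two_ne_zero hm, add_comm]
  simp [dimension, Nat.primeFactorsList_prime Nat.prime_two]

lemma pow_dimension_le {m b : ℕ} (hm : m ≠ 0) (hb : ∀ p ∈ m.primeFactorsList, b ≤ p) :
    b ^ dimension m ≤ m := by
  have := List.pow_card_le_prod _ b hb
  rwa [Nat.prod_primeFactorsList hm] at this

lemma three_pow_dimension_le_of_odd {m : ℕ} (hm : Odd m) : 3 ^ dimension m ≤ m := by
  refine pow_dimension_le (by rintro rfl; simp at hm) fun p hp => ?_
  have hp2 : p ≠ 2 := by
    rintro rfl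
    exact Nat.not_even_iff_odd.2 hm (even_iff_two_dvd.2 (Nat.dvd_of_mem_primeFactorsList hp))
  have := (Nat.prime_of_mem_primeFactorsList hp).two_le
  omega

lemma even_of_dimension_eq {m N d : ℕ} (hm : m ≤ 2 ^ N) (hd : 2 ^ N < 3 ^ d)
    (hmd : dimension m = d) : Even m := by
  subst hmd
  by_contra hodd
  have := three_pow_dimension_le_of_odd (Nat.not_even_iff_odd.1 hodd)
  omega

lemma T_succ_succ {n d : ℕ} (h : 2 ^ (n + 1) < 3 ^ (d + 1)) : T (n + 1) (d + 1) = T n d := by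
  symm
  refine Finset.card_nbij' (2 * ·) (· / 2) ?_ ?_ (fun m _ => by simp) ?_
  · intro m hm
    simp only [Finset.mem_coe, Finset.mem_filter, Finset.mem_Icc] at hm ⊢
    refine ⟨⟨by omega, by rw [pow_succ]; omega⟩, by rw [dimension_two_mul (by omega), hm.2]⟩
  · intro m hm
    simp only [Finset.mem_coe, Finset.mem_filter, Finset.mem_Icc] at hm ⊢
    obtain ⟨k, rfl⟩ := (even_of_dimension_eq hm.1.2 h hm.2).two_dvd
    rw [dimension_two_mul (by omega), pow_succ] at hm
    rw [Nat.mul_div_cancel_left k two_pos]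
    exact ⟨⟨by omega, by omega⟩, by omega⟩
  · intro m hm
    simp only [Finset.mem_coe, Finset.mem_filter, Finset.mem_Icc] at hm
    exact Nat.mul_div_cancel' (even_of_dimension_eq hm.1.2 h hm.2).two_dvd

lemma two_pow_succ_lt_three_pow {n : ℕ} (hn : 10 ≤ n) : 2 ^ (n + 1) < 3 ^ (n - 3) := by
  induction n, hn using Nat.le_induction with
  | base => norm_num
  | succ n hn ih =>
    rw [show n + 1 - 3 = n - 3 + 1 by omega, pow_succ, pow_succ 3]
    omega

/-- For n ≥ 10 there are exactly thirty-seven (n−4)-dimensional numbers in the 2^n space. -/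
theorem sub_four_dim_count (n : ℕ) (hn : 10 ≤ n) : T n (n - 4) = 37 := by
  induction n, hn using Nat.le_induction with
  | base => decide +kernel
  | succ n hn ih =>
    rw [show n + 1 - 4 = n - 4 + 1 by omega, T_succ_succ, ih]
    rw [show n - 4 + 1 = n - 3 by omega]
    exact two_pow_succ_lt_three_pow hn
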